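/- Let n ≥ 3 be an odd integer and θ ∈ (0, π/4]. There is a unique point t_{n−1,0} ∈ (−∞, t_{n,1}) such that H_n(t_{n−1,0}) = −H_n(t_{n−1,1}), where t_{n−1,1} is the smallest zero of H_{n−1}. Then: (1) for every t ≤ t_{n,1}, the function y ↦ Φ_n^θ(t,y) has exactly one zero in the interval [t_{n,n}, +∞); (2) for every t < t_{n−1,0}, the function y ↦ Φ_n^θ(t,y) has exactly one zero in ℝ. -/

import Mathlib

open Polynomial Real Set

/-- Physicists' Hermite polynomials: `H 0 = 1`, `H 1 = 2X`,
`H (n+2) = 2X * H (n+1) - 2(n+1) * H n`. -/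
noncomputable def hermiteH : ℕ → Polynomial ℝ
  | 0 => 1
  | 1 => Polynomial.C 2 * Polynomial.X
  | (n + 2) => Polynomial.C 2 * Polynomial.X * hermiteH (n + 1)
      - Polynomial.C ((2 * (n + 1) : ℕ) : ℝ) * hermiteH n

/-- `z : Fin m → ℝ` enumerates the zeros of `P` in increasing order. -/
def IsZeroEnum (P : Polynomial ℝ) (m : ℕ) (z : Fin m → ℝ) : Prop :=
  StrictMono z ∧ (∀ i, P.eval (z i) = 0) ∧ (∀ x : ℝ, P.eval x = 0 → ∃ i, x = z i)

/-- The eigenfunction `Φ_n^θ`. -/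
noncomputable def Phi (n : ℕ) (θ : ℝ) (p : ℝ × ℝ) : ℝ :=
  (Real.cos θ * (hermiteH n).eval p.1 + Real.sin θ * (hermiteH n).eval p.2) *
    Real.exp (-(p.1 ^ 2 + p.2 ^ 2) / 2)

/-- A critical zero of `u` : a common zero of `u` and its differential. -/
def IsCriticalZero (u : ℝ × ℝ → ℝ) (p : ℝ × ℝ) : Prop :=
  u p = 0 ∧ fderiv ℝ u p = 0

/-- Nodal set of `u`. -/
def nodalSet (u : ℝ × ℝ → ℝ) : Set (ℝ × ℝ) := {p | u p = 0}

/-- The set of nodal domains of `u`, i.e. of connected components of the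
complement of the nodal set. -/
def nodalDomains (u : ℝ × ℝ → ℝ) : Set (Set (ℝ × ℝ)) :=
  {C | ∃ p, u p ≠ 0 ∧ C = connectedComponentIn {q | u q ≠ 0} p}

/-!
Since `H_n' = 2n H_{n-1}`, the polynomial `H_n` increases strictly outside the interval `[-s, s]`
spanned by the zeros of the even polynomial `H_{n-1}`, and by Rolle's theorem these zeros lie
strictly between `t_{n,1}` and `t_{n,n}`. On `[-s, s]`, Sonin's function `2n H_n² + H_n'²`, whose
derivative is `4x H_n'²`, bounds `H_n` by `K = H_n(-s) = H_n(t_{n-1,1}) > 0`. Now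
`Φ_n^θ(t, y) = 0` iff `H_n(y) = -cot θ · H_n(t)`, with `cot θ ≥ 1`: for `t ≤ t_{n,1}` this level
is `≥ 0` and is attained exactly once on `[t_{n,n}, ∞)`, and for `t < t_{n-1,0}` it exceeds
`-H_n(t) > K`, so it is attained exactly once on `ℝ`, to the right of `s`.
-/

lemma hermiteH_zero : hermiteH 0 = 1 := rfl

lemma hermiteH_one : hermiteH 1 = 2 * X := by simp [hermiteH, map_ofNat]

lemma hermiteH_add_two (n : ℕ) :
    hermiteH (n + 2) = 2 * X * hermiteH (n + 1) - 2 * ((n : ℝ[X]) + 1) * hermiteH n := by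
  rw [hermiteH]; simp [map_ofNat]

lemma hermiteH_degree_and_leadingCoeff :
    ∀ n : ℕ, (hermiteH n).degree = n ∧ (hermiteH n).leadingCoeff = 2 ^ n
  | 0 => by simp [hermiteH]
  | 1 => by simp [hermiteH]
  | n + 2 => by
    obtain ⟨hd₁, hl₁⟩ := hermiteH_degree_and_leadingCoeff (n + 1)
    obtain ⟨hd₀, -⟩ := hermiteH_degree_and_leadingCoeff n
    have hmain : (C 2 * X * hermiteH (n + 1)).degree = ↑(n + 2) := by
      rw [degree_mul, hd₁, degree_C_mul_X (by norm_num)]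
      norm_cast; omega
    have hlower : (C ((2 * (n + 1) : ℕ) : ℝ) * hermiteH n).degree <
        (C 2 * X * hermiteH (n + 1)).degree := by
      rw [degree_C_mul (by positivity), hd₀, hmain]; norm_cast; omega
    rw [hermiteH, degree_sub_eq_left_of_degree_lt hlower, leadingCoeff_sub_of_degree_lt hlower,
      hmain, leadingCoeff_mul, leadingCoeff_mul, hl₁, leadingCoeff_C, leadingCoeff_X]
    refine ⟨rfl, by ring⟩

lemma natDegree_hermiteH (n : ℕ) : (hermiteH n).natDegree = n :=
  natDegree_eq_of_degree_eq_some (hermiteH_degree_and_leadingCoeff n).1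

lemma derivative_hermiteH_succ : ∀ n : ℕ,
    derivative (hermiteH (n + 1)) = 2 * ((n : ℝ[X]) + 1) * hermiteH n
  | 0 => by simp [hermiteH_one, hermiteH_zero]
  | 1 => by
    rw [hermiteH_add_two 0]
    simp only [zero_add, hermiteH_one, hermiteH_zero, derivative_mul, derivative_sub,
      derivative_ofNat, derivative_X, derivative_one, Nat.cast_zero]
    ring
  | n + 2 => by
    rw [hermiteH_add_two (n + 1)]
    simp only [derivative_sub, derivative_mul, derivative_ofNat, derivative_X, derivative_add,
      derivative_natCast, derivative_one, derivative_hermiteH_succ (n + 1),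
      derivative_hermiteH_succ n]
    push_cast
    linear_combination (-2 * ((n : ℝ[X]) + 2)) * hermiteH_add_two n

lemma derivative_hermiteH (n : ℕ) :
    derivative (hermiteH n) = 2 * (n : ℝ[X]) * hermiteH (n - 1) := by
  cases n with
  | zero => simp [hermiteH_zero]
  | succ n => simp [derivative_hermiteH_succ]

lemma derivative_derivative_hermiteH (n : ℕ) :
    derivative (derivative (hermiteH n)) =
      2 * X * derivative (hermiteH n) - 2 * (n : ℝ[X]) * hermiteH n := by
  match n with
  | 0 => simp [hermiteH_zero]
  | 1 =>
    simp only [hermiteH_one, derivative_mul, derivative_ofNat, zero_mul, derivative_X, mul_one,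
      zero_add, Nat.cast_one]
    ring
  | n + 2 =>
    rw [derivative_hermiteH_succ, derivative_mul, derivative_hermiteH_succ]
    simp only [derivative_mul, derivative_ofNat, derivative_add, derivative_natCast, derivative_one]
    push_cast
    linear_combination (2 * ((n : ℝ[X]) + 2)) * hermiteH_add_two n

lemma hermiteH_eval_neg : ∀ (n : ℕ) (x : ℝ),
    (hermiteH n).eval (-x) = (-1) ^ n * (hermiteH n).eval x
  | 0, x => by simp [hermiteH_zero]
  | 1, x => by simp [hermiteH_one]
  | n + 2, x => by
    simp only [hermiteH_add_two, eval_sub, eval_mul, eval_ofNat, eval_X, eval_add, eval_natCast,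
      eval_one, hermiteH_eval_neg (n + 1) x, hermiteH_eval_neg n x]
    ring

lemma hermiteH_isRoot_neg_iff (n : ℕ) (x : ℝ) :
    (hermiteH n).IsRoot (-x) ↔ (hermiteH n).IsRoot x := by
  simp [IsRoot, hermiteH_eval_neg]

lemma eval_hermiteH_abs_of_even {n : ℕ} (hn : Even n) (x : ℝ) :
    (hermiteH n).eval |x| = (hermiteH n).eval x := by
  rcases abs_choice x with h | h <;> simp [h, hermiteH_eval_neg, hn.neg_one_pow]

lemma isRoot_derivative_hermiteH_iff {n : ℕ} (hn : 0 < n) (x : ℝ) :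
    (derivative (hermiteH n)).IsRoot x ↔ (hermiteH (n - 1)).IsRoot x := by
  simp [IsRoot, derivative_hermiteH, hn.ne']

open Filter

lemma tendsto_hermiteH_atTop {n : ℕ} (hn : 0 < n) :
    Tendsto (fun x => (hermiteH n).eval x) atTop atTop := by
  obtain ⟨hdeg, hlc⟩ := hermiteH_degree_and_leadingCoeff n
  exact tendsto_atTop_of_leadingCoeff_nonneg _ (by rw [hdeg]; exact_mod_cast hn)
    (by rw [hlc]; positivity)

lemma tendsto_hermiteH_atBot_of_odd {n : ℕ} (hn : Odd n) :
    Tendsto (fun x => (hermiteH n).eval x) atBot atBot := by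
  refine (tendsto_neg_atTop_atBot.comp
    ((tendsto_hermiteH_atTop hn.pos).comp tendsto_neg_atBot_atTop)).congr fun x => ?_
  simp [hermiteH_eval_neg, hn.neg_one_pow]

noncomputable def hermiteSonin (n : ℕ) : ℝ[X] :=
  2 * (n : ℝ[X]) * hermiteH n ^ 2 + derivative (hermiteH n) ^ 2

lemma derivative_hermiteSonin (n : ℕ) :
    derivative (hermiteSonin n) = 4 * X * derivative (hermiteH n) ^ 2 := by
  simp only [hermiteSonin, derivative_add, derivative_mul, derivative_pow, derivative_ofNat,
    derivative_natCast, derivative_derivative_hermiteH, Nat.cast_ofNat, map_ofNat]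
  ring

lemma hermiteSonin_eval_neg (n : ℕ) (x : ℝ) :
    (hermiteSonin n).eval (-x) = (hermiteSonin n).eval x := by
  have hsq : ∀ k : ℕ, ((-1 : ℝ) ^ k) ^ 2 = 1 := fun k => by
    rw [← pow_mul, mul_comm, pow_mul, neg_one_sq, one_pow]
  simp only [hermiteSonin, derivative_hermiteH, eval_add, eval_mul, eval_pow, eval_ofNat,
    eval_natCast, hermiteH_eval_neg, mul_pow, hsq]
  ring

lemma monotoneOn_hermiteSonin (n : ℕ) : MonotoneOn (fun x => (hermiteSonin n).eval x) (Ici 0) := by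
  refine monotoneOn_of_deriv_nonneg (convex_Ici 0) (hermiteSonin n).continuousOn
    (hermiteSonin n).differentiableOn fun x hx => ?_
  rw [interior_Ici] at hx
  rw [Polynomial.deriv, derivative_hermiteSonin]
  simp only [eval_mul, eval_pow, eval_X, eval_ofNat]
  have : 0 < x := hx
  positivity

lemma hermiteSonin_eval_le_of_abs_le (n : ℕ) {x y : ℝ} (h : |y| ≤ |x|) :
    (hermiteSonin n).eval y ≤ (hermiteSonin n).eval x := by
  have habs : ∀ z, (hermiteSonin n).eval |z| = (hermiteSonin n).eval z := fun z => by
    rcases abs_choice z with h | h <;> simp [h, hermiteSonin_eval_neg]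
  rw [← habs x, ← habs y]
  exact monotoneOn_hermiteSonin n (abs_nonneg y) (abs_nonneg x) h

lemma sq_eval_hermiteH_le_of_abs_le {n : ℕ} (hn : 0 < n) {x y : ℝ}
    (hx : (derivative (hermiteH n)).IsRoot x) (h : |y| ≤ |x|) :
    (hermiteH n).eval y ^ 2 ≤ (hermiteH n).eval x ^ 2 := by
  have hS := hermiteSonin_eval_le_of_abs_le n h
  simp only [hermiteSonin, eval_add, eval_mul, eval_pow, eval_ofNat, eval_natCast, hx.eq_zero] at hS
  have hn' : (0 : ℝ) < n := by exact_mod_cast hn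
  nlinarith [sq_nonneg ((derivative (hermiteH n)).eval y)]

lemma pos_of_forall_ne_zero_of_tendsto_atTop {f : ℝ → ℝ} (hf : Continuous f)
    (hlim : Tendsto f atTop atTop) {s x : ℝ} (hne : ∀ y, s < y → f y ≠ 0) (hx : s < x) :
    0 < f x := by
  by_contra! hfx
  obtain ⟨y, hy, hfy⟩ := intermediate_value_Ici hf.continuousOn hlim (mem_Ici.2 hfx)
  exact hne y (hx.trans_le hy) hfy

section StrictMonoOn

variable {α δ : Type*} [ConditionallyCompleteLinearOrder α] [TopologicalSpace α] [OrderTopology α]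
  [DenselyOrdered α] [LinearOrder δ] [TopologicalSpace δ] [OrderClosedTopology δ] {f : α → δ}

lemma StrictMonoOn.existsUnique_mem_Ici_eq {s : α} {c : δ} (hmono : StrictMonoOn f (Ici s))
    (hf : ContinuousOn f (Ici s)) (htop : Tendsto f atTop atTop) (hc : f s ≤ c) :
    ∃! y, y ∈ Ici s ∧ f y = c := by
  obtain ⟨y, hy, rfl⟩ := intermediate_value_Ici hf htop hc
  exact ⟨y, ⟨hy, rfl⟩, fun z hz => hmono.injOn hz.1 hy hz.2⟩

lemma StrictMonoOn.existsUnique_lt_eq {s a : α} {c : δ} (hmono : StrictMonoOn f (Iic s))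
    (hf : ContinuousOn f (Iic a)) (hbot : Tendsto f atBot atBot) (has : a ≤ s) (hc : c < f a) :
    ∃! y, y < a ∧ f y = c := by
  obtain ⟨y, hy, rfl⟩ := intermediate_value_Iio hf hbot hc
  exact ⟨y, ⟨hy, rfl⟩, fun z hz =>
    hmono.injOn (mem_Iic.2 (hz.1.le.trans has)) (mem_Iic.2 (le_of_lt hy |>.trans has)) hz.2⟩

lemma StrictMonoOn.existsUnique_eq_of_forall_le {s : α} {K c : δ} (hmono : StrictMonoOn f (Ici s))
    (hf : ContinuousOn f (Ici s)) (htop : Tendsto f atTop atTop) (hK : ∀ y ≤ s, f y ≤ K)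
    (hc : K < c) : ∃! y, f y = c := by
  obtain ⟨y, ⟨-, hfy⟩, huniq⟩ :=
    hmono.existsUnique_mem_Ici_eq hf htop ((hK s le_rfl).trans hc.le)
  refine ⟨y, hfy, fun z hz => huniq z ⟨mem_Ici.2 (not_lt.1 fun hzs => ?_), hz⟩⟩
  exact (hK z hzs.le).not_gt (hz ▸ hc)

end StrictMonoOn

lemma Polynomial.exists_eq_of_isRoot_of_natDegree_le {R : Type*} [CommRing R] [IsDomain R]
    {P : R[X]} (hP : P ≠ 0) {m : ℕ} {c : Fin m → R} (hc : Function.Injective c)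
    (hroot : ∀ i, P.IsRoot (c i)) (hdeg : P.natDegree ≤ m) {x : R} (hx : P.IsRoot x) :
    ∃ i, c i = x := by
  classical
  have hsub : Finset.univ.image c ⊆ P.roots.toFinset := by
    simp [Finset.subset_iff, hP, fun i => (hroot i).eq_zero]
  have hcard : P.roots.toFinset.card ≤ (Finset.univ.image c).card := by
    rw [Finset.card_image_of_injective _ hc, Finset.card_univ, Fintype.card_fin]
    exact (Multiset.toFinset_card_le _).trans ((card_roots' P).trans hdeg)
  have hx' : x ∈ P.roots.toFinset := by simp [hP, hx.eq_zero]
  simpa [← Finset.eq_of_subset_of_card_le hsub hcard] using hx'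

lemma Polynomial.mem_Ioo_of_isRoot_derivative {P : ℝ[X]} {n : ℕ} (hn : 0 < n)
    (hdeg : P.natDegree = n) {z : Fin n → ℝ} (hz : StrictMono z) (hroot : ∀ i, P.IsRoot (z i))
    {x : ℝ} (hx : (derivative P).IsRoot x) : x ∈ Ioo (z ⟨0, hn⟩) (z ⟨n - 1, by omega⟩) := by
  have hrolle : ∀ i : Fin (n - 1), ∃ c ∈ Ioo (z ⟨i, by omega⟩) (z ⟨i + 1, by omega⟩),
      (derivative P).IsRoot c := fun i => by
    obtain ⟨c, hc, hdc⟩ := exists_deriv_eq_zero (hz (Fin.mk_lt_mk.2 (Nat.lt_succ_self i)))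
      P.continuousOn (by rw [(hroot _).eq_zero, (hroot _).eq_zero])
    exact ⟨c, hc, by rwa [Polynomial.deriv] at hdc⟩
  choose c hc hcroot using hrolle
  have hcmono : StrictMono c := fun i j hij =>
    ((hc i).2.trans_le (hz.monotone (Fin.mk_le_mk.2 hij))).trans (hc j).1
  obtain ⟨i, rfl⟩ := exists_eq_of_isRoot_of_natDegree_le (derivative_ne_zero.2 (by omega))
    hcmono.injective hcroot (hdeg ▸ natDegree_derivative_le P) hx
  exact ⟨(hz.monotone (Fin.mk_le_mk.2 (Nat.zero_le _))).trans_lt (hc i).1,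
    (hc i).2.trans_le (hz.monotone (Fin.mk_le_mk.2 (by omega)))⟩

lemma eval_hermiteH_pos_of_lt {n : ℕ} (hn : 0 < n) {s x : ℝ}
    (hs : ∀ y, (hermiteH n).IsRoot y → y ≤ s) (hx : s < x) : 0 < (hermiteH n).eval x :=
  pos_of_forall_ne_zero_of_tendsto_atTop (hermiteH n).continuous (tendsto_hermiteH_atTop hn)
    (fun y hy hy0 => (hs y hy0).not_gt hy) hx

lemma eval_hermiteH_pos_of_lt_abs {n : ℕ} (hn : 0 < n) (he : Even n) {s x : ℝ}
    (hs : ∀ y, (hermiteH n).IsRoot y → y ≤ s) (hx : s < |x|) : 0 < (hermiteH n).eval x := by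
  rw [← eval_hermiteH_abs_of_even he]
  exact eval_hermiteH_pos_of_lt hn hs hx

lemma deriv_eval_hermiteH (n : ℕ) (x : ℝ) :
    deriv (fun x => (hermiteH n).eval x) x = 2 * n * (hermiteH (n - 1)).eval x := by
  simp [Polynomial.deriv, derivative_hermiteH]

lemma strictMonoOn_hermiteH_Ici {n : ℕ} (hn : 1 < n) {s : ℝ}
    (hs : ∀ y, (hermiteH (n - 1)).IsRoot y → y ≤ s) :
    StrictMonoOn (fun x => (hermiteH n).eval x) (Ici s) := by
  refine strictMonoOn_of_deriv_pos (convex_Ici s) (hermiteH n).continuousOn fun x hx => ?_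
  rw [interior_Ici] at hx
  rw [deriv_eval_hermiteH]
  have := eval_hermiteH_pos_of_lt (by omega) hs hx
  positivity

lemma strictMonoOn_hermiteH_Iic {n : ℕ} (hn : 1 < n) (he : Even (n - 1)) {s : ℝ}
    (hs : ∀ y, (hermiteH (n - 1)).IsRoot y → y ≤ s) :
    StrictMonoOn (fun x => (hermiteH n).eval x) (Iic (-s)) := by
  refine strictMonoOn_of_deriv_pos (convex_Iic _) (hermiteH n).continuousOn fun x hx => ?_
  rw [interior_Iic] at hx
  rw [deriv_eval_hermiteH]
  have := eval_hermiteH_pos_of_lt_abs (by omega) he hs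
    (lt_of_lt_of_le (lt_neg_of_lt_neg hx) (neg_le_abs x))
  positivity

lemma eval_hermiteH_le_of_le {n : ℕ} (hn : 1 < n) (he : Even (n - 1)) {s y : ℝ}
    (hroot : (hermiteH (n - 1)).IsRoot (-s)) (hs : ∀ x, (hermiteH (n - 1)).IsRoot x → x ≤ s)
    (hpos : 0 ≤ (hermiteH n).eval (-s)) (hy : y ≤ s) :
    (hermiteH n).eval y ≤ (hermiteH n).eval (-s) := by
  rcases le_or_gt y (-s) with hys | hys
  · exact (strictMonoOn_hermiteH_Iic hn he hs).monotoneOn hys self_mem_Iic hys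
  · have habs : |y| ≤ |-s| := (abs_le.2 ⟨hys.le, hy⟩).trans (abs_neg s ▸ le_abs_self s)
    have hsq := sq_eval_hermiteH_le_of_abs_le (by omega)
      ((isRoot_derivative_hermiteH_iff (by omega) _).2 hroot) habs
    exact (abs_le_of_sq_le_sq' hsq hpos).2

namespace IsZeroEnum

variable {P : ℝ[X]} {m : ℕ} {z : Fin m → ℝ}

lemma first_le (h : IsZeroEnum P m z) (hm : 0 < m) {x : ℝ} (hx : P.IsRoot x) : z ⟨0, hm⟩ ≤ x := by
  obtain ⟨i, rfl⟩ := h.2.2 x hx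
  exact h.1.monotone (Fin.mk_le_mk.2 (Nat.zero_le _))

lemma le_last (h : IsZeroEnum P m z) (hm : 0 < m) {x : ℝ} (hx : P.IsRoot x) :
    x ≤ z ⟨m - 1, by omega⟩ := by
  obtain ⟨i, rfl⟩ := h.2.2 x hx
  exact h.1.monotone (Fin.mk_le_mk.2 (Nat.le_sub_one_of_lt i.isLt))

lemma first_eq_neg_last (h : IsZeroEnum P m z) (hm : 0 < m)
    (hsymm : ∀ x, P.IsRoot x → P.IsRoot (-x)) : z ⟨0, hm⟩ = -z ⟨m - 1, by omega⟩ := by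
  have h₁ := h.first_le hm (hsymm _ (h.2.1 ⟨m - 1, by omega⟩))
  have h₂ := h.le_last hm (hsymm _ (h.2.1 ⟨0, hm⟩))
  linarith

end IsZeroEnum

lemma one_le_cos_div_sin {θ : ℝ} (hθ : θ ∈ Ioc 0 (π / 4)) : 1 ≤ cos θ / sin θ := by
  have hsin : 0 < sin θ := sin_pos_of_pos_of_lt_pi hθ.1 (by linarith [hθ.2, pi_pos])
  have h₁ : sin θ ≤ sin (π / 4) := sin_le_sin_of_le_of_le_pi_div_two
    (by linarith [hθ.1, pi_pos]) (by linarith [pi_pos]) hθ.2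
  have h₂ : cos (π / 4) ≤ cos θ :=
    cos_le_cos_of_nonneg_of_le_pi hθ.1.le (by linarith [pi_pos]) hθ.2
  rw [one_le_div hsin]
  linarith [sin_pi_div_four, cos_pi_div_four]

lemma Phi_eq_zero_iff (n : ℕ) {θ : ℝ} (hθ : sin θ ≠ 0) (t y : ℝ) :
    Phi n θ (t, y) = 0 ↔ (hermiteH n).eval y = -(cos θ / sin θ) * (hermiteH n).eval t := by
  rw [Phi, mul_eq_zero, or_iff_left (exp_ne_zero _)]
  field_simp
  constructor <;> intro h <;> linarith

/-- (Barrier lemma, vertical version.) Let `n ≥ 3` be odd and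
`θ ∈ (0, π/4]`. There is a unique `t₀ < t_{n,1}` with `H_n(t₀) = -H_n(t_{n-1,1})`,
and for this `t₀`:
(1) for every `t ≤ t_{n,1}`, `y ↦ Φ_n^θ(t,y)` has exactly one zero in `[t_{n,n}, ∞)`;
(2) for every `t < t₀`, `y ↦ Φ_n^θ(t,y)` has exactly one zero in `ℝ`. -/
theorem barrier_lemma_vertical
    (n : ℕ) (hn3 : 3 ≤ n) (hodd : Odd n)
    (θ : ℝ) (hθ : θ ∈ Set.Ioc 0 (π / 4))
    (tn : Fin n → ℝ) (htn : IsZeroEnum (hermiteH n) n tn)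
    (tz : Fin (n - 1) → ℝ) (htz : IsZeroEnum (hermiteH (n - 1)) (n - 1) tz) :
    (∃! t₀ : ℝ, t₀ < tn ⟨0, by omega⟩ ∧
      (hermiteH n).eval t₀ = -(hermiteH n).eval (tz ⟨0, by omega⟩)) ∧
    ∀ t₀ : ℝ, (t₀ < tn ⟨0, by omega⟩ ∧
        (hermiteH n).eval t₀ = -(hermiteH n).eval (tz ⟨0, by omega⟩)) →
      (∀ t : ℝ, t ≤ tn ⟨0, by omega⟩ →
        ∃! y : ℝ, y ∈ Set.Ici (tn ⟨n - 1, by omega⟩) ∧ Phi n θ (t, y) = 0) ∧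
      (∀ t : ℝ, t < t₀ → ∃! y : ℝ, Phi n θ (t, y) = 0) := by
  have heven : Even (n - 1) := Nat.Odd.sub_odd hodd odd_one
  set a := tn ⟨0, by omega⟩
  set b := tn ⟨n - 1, by omega⟩
  set s := tz ⟨n - 1 - 1, by omega⟩
  have hs : ∀ x, (hermiteH (n - 1)).IsRoot x → x ≤ s := fun x hx => htz.le_last (by omega) hx
  have hs₀ : tz ⟨0, by omega⟩ = -s :=
    htz.first_eq_neg_last (by omega) fun x hx => (hermiteH_isRoot_neg_iff _ x).2 hx
  have hab : ∀ x, (hermiteH (n - 1)).IsRoot x → x ∈ Ioo a b := fun x hx =>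
    mem_Ioo_of_isRoot_derivative (by omega) (natDegree_hermiteH n) htn.1 htn.2.1
      ((isRoot_derivative_hermiteH_iff (by omega) x).2 hx)
  have has : a < -s := hs₀ ▸ (hab _ (htz.2.1 _)).1
  have hsb : s < b := (hab _ (htz.2.1 _)).2
  have hleft := strictMonoOn_hermiteH_Iic (by omega) heven hs
  have hright := strictMonoOn_hermiteH_Ici (by omega) hs
  have hK : 0 < (hermiteH n).eval (-s) := htn.2.1 ⟨0, _⟩ ▸ hleft has.le self_mem_Iic has
  have hmax : ∀ y ≤ s, (hermiteH n).eval y ≤ (hermiteH n).eval (-s) := fun y =>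
    eval_hermiteH_le_of_le (by omega) heven (hs₀ ▸ htz.2.1 _) hs hK.le
  have hsin : 0 < sin θ := sin_pos_of_pos_of_lt_pi hθ.1 (by linarith [hθ.2, pi_pos])
  have hcot := one_le_cos_div_sin hθ
  rw [hs₀]
  refine ⟨hleft.existsUnique_lt_eq (hermiteH n).continuousOn (tendsto_hermiteH_atBot_of_odd hodd)
    has.le (by rw [htn.2.1]; linarith), fun t₀ ht₀ => ⟨fun t ht => ?_, fun t ht => ?_⟩⟩
  · simp_rw [Phi_eq_zero_iff n hsin.ne']
    refine (hright.mono (Ici_subset_Ici.2 hsb.le)).existsUnique_mem_Ici_eq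
      (hermiteH n).continuousOn (tendsto_hermiteH_atTop (by omega)) ?_
    have hHt : (hermiteH n).eval t ≤ 0 :=
      htn.2.1 ⟨0, _⟩ ▸ hleft.monotoneOn (ht.trans has.le) has.le ht
    rw [htn.2.1]
    nlinarith
  · simp_rw [Phi_eq_zero_iff n hsin.ne']
    refine hright.existsUnique_eq_of_forall_le (hermiteH n).continuousOn
      (tendsto_hermiteH_atTop (by omega)) hmax ?_
    have hHt : (hermiteH n).eval t < -(hermiteH n).eval (-s) :=
      ht₀.2 ▸ hleft (ht.le.trans (ht₀.1.trans has).le) (ht₀.1.trans has).le ht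
    nlinarith
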